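/- Let n_{5,3} be the 5-dimensional nilpotent Lie algebra with structure equations (-e^{24} - e^{35}, 0, 0, 0, 0), i.e., nonzero brackets [e2,e4] = e1 and [e3,e5] = e1. Let t_m = log((m + √(m² - 4))/2) for an integer m ≥ 3, and set f1 = (e^{t_m} - e^{-t_m}) e1, f2 = e2 + e4, f3 = -e^{t_m} e2 - e^{-t_m} e4, f4 = e3 + e5, f5 = -e^{t_m} e3 - e^{-t_m} e5. Then {f1,…,f5} is a basis of n_{5,3} whose only nonzero brackets are [f2,f3] = f1 and [f4,f5] = f1. -/
import Mathlib


namespace Stmt16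

abbrev V : Type := Fin 5 → ℝ

/-- standard basis -/
noncomputable def e (i : Fin 5) : V := Pi.single i 1

/-- the Lie bracket of `n_{5,3}`: `[e2,e4] = e1`, `[e3,e5] = e1` -/
def br (x y : V) : V := fun k =>
  match k with
  | 0 => (x 1 * y 3 - x 3 * y 1) + (x 2 * y 4 - x 4 * y 2)
  | 1 => 0
  | 2 => 0
  | 3 => 0
  | 4 => 0

/-- `t_m = log((m + √(m² - 4))/2)` -/
noncomputable def tm (m : ℕ) : ℝ := Real.log ((m + Real.sqrt ((m : ℝ) ^ 2 - 4)) / 2)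

/-- the new basis `f1, …, f5` -/
noncomputable def f (m : ℕ) : Fin 5 → V := fun i =>
  match i with
  | 0 => (Real.exp (tm m) - Real.exp (-tm m)) • e 0
  | 1 => e 1 + e 3
  | 2 => -(Real.exp (tm m) • e 1) - Real.exp (-tm m) • e 3
  | 3 => e 2 + e 4
  | 4 => -(Real.exp (tm m) • e 2) - Real.exp (-tm m) • e 4

lemma tm_pos (m : ℕ) (hm : 3 ≤ m) : 0 < tm m := by
  have hm' : (3:ℝ) ≤ (m:ℝ) := by exact_mod_cast hm
  have h0 : (0:ℝ) ≤ Real.sqrt ((m : ℝ) ^ 2 - 4) := Real.sqrt_nonneg _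
  apply Real.log_pos
  linarith

lemma ab_ne (m : ℕ) (hm : 3 ≤ m) : Real.exp (-tm m) < Real.exp (tm m) :=
  Real.exp_lt_exp.2 (by have := tm_pos m hm; linarith)

lemma f0 (m : ℕ) : f m 0 = ![Real.exp (tm m) - Real.exp (-tm m), 0, 0, 0, 0] := by
  funext k; fin_cases k <;> simp [f, e, Pi.single_apply]
lemma f1 (m : ℕ) : f m 1 = ![0, 1, 0, 1, 0] := by
  funext k; fin_cases k <;> simp [f, e, Pi.single_apply]
lemma f2 (m : ℕ) : f m 2 = ![0, -Real.exp (tm m), 0, -Real.exp (-tm m), 0] := by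
  funext k; fin_cases k <;> simp [f, e, Pi.single_apply]
lemma f3 (m : ℕ) : f m 3 = ![0, 0, 1, 0, 1] := by
  funext k; fin_cases k <;> simp [f, e, Pi.single_apply]
lemma f4 (m : ℕ) : f m 4 = ![0, 0, -Real.exp (tm m), 0, -Real.exp (-tm m)] := by
  funext k; fin_cases k <;> simp [f, e, Pi.single_apply]

lemma li (m : ℕ) (hm : 3 ≤ m) : LinearIndependent ℝ (f m) := by
  have hab := ab_ne m hm
  rw [Fintype.linearIndependent_iff]
  intro g hg
  rw [Fin.sum_univ_five, f0, f1, f2, f3, f4] at hg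
  have h0 := congrFun hg 0
  have h1 := congrFun hg 1
  have h2 := congrFun hg 2
  have h3 := congrFun hg 3
  have h4 := congrFun hg 4
  simp at h0 h1 h2 h3 h4
  have h0' : g 0 = 0 := h0.resolve_right (by linarith)
  have hg2 : g 2 * (Real.exp (tm m) - Real.exp (-tm m)) = 0 := by linear_combination h3 - h1
  have hg4 : g 4 * (Real.exp (tm m) - Real.exp (-tm m)) = 0 := by linear_combination h4 - h2
  have h2' : g 2 = 0 := by
    rcases mul_eq_zero.1 hg2 with h | h
    · exact h
    · linarith
  have h4' : g 4 = 0 := by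
    rcases mul_eq_zero.1 hg4 with h | h
    · exact h
    · linarith
  have h1' : g 1 = 0 := by rw [h2'] at h1; simpa using h1
  have h3' : g 3 = 0 := by rw [h4'] at h2; simpa using h2
  intro i; fin_cases i <;> simpa using by assumption

/-- for any integer `m ≥ 3`, `{f1,…,f5}` is a basis of `n_{5,3}` whose only
nonzero brackets are `[f2,f3] = f1` and `[f4,f5] = f1`. -/
theorem stmt_16 (m : ℕ) (hm : 3 ≤ m) :
    LinearIndependent ℝ (f m) ∧
    Submodule.span ℝ (Set.range (f m)) = ⊤ ∧
    br (f m 1) (f m 2) = f m 0 ∧ br (f m 3) (f m 4) = f m 0 ∧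
    br (f m 1) (f m 3) = 0 ∧ br (f m 1) (f m 4) = 0 ∧
    br (f m 2) (f m 3) = 0 ∧ br (f m 2) (f m 4) = 0 ∧
    (∀ i : Fin 5, br (f m 0) (f m i) = 0) := by
  have hli := li m hm
  refine ⟨hli, ?_, ?_, ?_, ?_, ?_, ?_, ?_, ?_⟩
  · apply hli.span_eq_top_of_card_eq_finrank
    simp
  · rw [f0, f1, f2]; funext k; fin_cases k <;> simp [br] <;> ring
  · rw [f0, f3, f4]; funext k; fin_cases k <;> simp [br] <;> ring
  · rw [f1, f3]; funext k; fin_cases k <;> simp [br]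
  · rw [f1, f4]; funext k; fin_cases k <;> simp [br] <;> ring
  · rw [f2, f3]; funext k; fin_cases k <;> simp [br]
  · rw [f2, f4]; funext k; fin_cases k <;> simp [br] <;> ring
  · intro i
    funext k; rw [f0]; fin_cases k <;> simp [br]

end Stmt16
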